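/- Let G be a triple-ordered graph with orders <₁, <₂, <₃ that is double-magical, i.e., E(G) = E(G¹) ∩ E(G²) where G¹ (with <₁, <₂) and G² (with <₁, <₃) are magical. Define a ≺₁ b iff a <₁ b, a <₂ b, a <₃ b, and ab ∈ E(G). Then ≺₁ is transitive; moreover, if a ≺₁ b and bc ∈ E(G) with b <₁ c, then ac ∈ E(G). -/

import Mathlib

/-! If `ac` were missing from `G¹` (resp. `G²`), then `a - b - c` would be an induced path there,
and magicality would put `b` below `a` in `<₂` (resp. `<₃`), contradicting `a ≺₁ b`.
Transitivity of `≺₁` then only adds the transitivity of the three orders. -/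

def SimpleGraph.IsMagical {V : Type*} (H : SimpleGraph V) (r s : V → V → Prop) : Prop :=
  ∀ a b c : V, r a b → r b c → H.Adj a b → H.Adj b c → ¬ H.Adj a c → s b a ∧ s b c

theorem SimpleGraph.IsMagical.adj_of_adj_of_adj {V : Type*} {H : SimpleGraph V}
    {r s : V → V → Prop} [Std.Asymm s] (hH : H.IsMagical r s) {a b c : V}
    (hrab : r a b) (hsab : s a b) (hrbc : r b c) (hab : H.Adj a b) (hbc : H.Adj b c) :
    H.Adj a c := by
  by_contra hac
  exact asymm hsab (hH a b c hrab hrbc hab hbc hac).1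

/-- In a double-magical triple-ordered graph, the relation
`a ≺₁ b ↔ a <₁ b ∧ a <₂ b ∧ a <₃ b ∧ ab ∈ E(G)` is transitive; moreover if
`a ≺₁ b`, `b <₁ c` and `bc ∈ E(G)`, then `ac ∈ E(G)`. -/
theorem doubleMagical_prec1 {V : Type*} (G G1 G2 : SimpleGraph V)
    (lt1 lt2 lt3 : V → V → Prop)
    [IsStrictTotalOrder V lt1] [IsStrictTotalOrder V lt2] [IsStrictTotalOrder V lt3]
    (hmag1 : ∀ a b c : V, lt1 a b → lt1 b c → G1.Adj a b → G1.Adj b c → ¬ G1.Adj a c →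
      lt2 b a ∧ lt2 b c)
    (hmag2 : ∀ a b c : V, lt1 a b → lt1 b c → G2.Adj a b → G2.Adj b c → ¬ G2.Adj a c →
      lt3 b a ∧ lt3 b c)
    (hE : ∀ u v : V, G.Adj u v ↔ G1.Adj u v ∧ G2.Adj u v) :
    (∀ a b c : V,
      (lt1 a b ∧ lt2 a b ∧ lt3 a b ∧ G.Adj a b) →
      (lt1 b c ∧ lt2 b c ∧ lt3 b c ∧ G.Adj b c) →
      (lt1 a c ∧ lt2 a c ∧ lt3 a c ∧ G.Adj a c)) ∧
    (∀ a b c : V, (lt1 a b ∧ lt2 a b ∧ lt3 a b ∧ G.Adj a b) →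
      lt1 b c → G.Adj b c → G.Adj a c) := by
  have adj_ac : ∀ a b c : V, (lt1 a b ∧ lt2 a b ∧ lt3 a b ∧ G.Adj a b) →
      lt1 b c → G.Adj b c → G.Adj a c := by
    rintro a b c ⟨h1, h2, h3, hab⟩ hbc habc
    obtain ⟨hab1, hab2⟩ := (hE a b).mp hab
    obtain ⟨hbc1, hbc2⟩ := (hE b c).mp habc
    exact (hE a c).mpr ⟨SimpleGraph.IsMagical.adj_of_adj_of_adj hmag1 h1 h2 hbc hab1 hbc1,
      SimpleGraph.IsMagical.adj_of_adj_of_adj hmag2 h1 h3 hbc hab2 hbc2⟩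
  refine ⟨?_, adj_ac⟩
  rintro a b c hab ⟨h1', h2', h3', hbc⟩
  have ⟨h1, h2, h3, _⟩ := hab
  exact ⟨_root_.trans h1 h1', _root_.trans h2 h2', _root_.trans h3 h3', adj_ac a b c hab h1' hbc⟩
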